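/- For every cluster s ∈ Σ, the cluster s is coloured red if and only if |s ∩ R₁| is odd and |s ∩ R₂| is even. -/
import Mathlib


/-- Colours of roots and clusters. -/
inductive Colour : Type
  | red | blue | purple | black
deriving DecidableEq

/-- A cluster picture on a finite set `R`: a collection of nonempty subsets of `R`
containing `R` and all singletons, any two of which are nested or disjoint. -/
def IsClusterPicture {α : Type*} [DecidableEq α] (R : Finset α) (CP : Set (Finset α)) : Prop :=
  (∀ s ∈ CP, s.Nonempty ∧ s ⊆ R) ∧ R ∈ CP ∧ (∀ r ∈ R, ({r} : Finset α) ∈ CP) ∧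
    ∀ s ∈ CP, ∀ t ∈ CP, s ⊆ t ∨ t ⊆ s ∨ s ∩ t = ∅

/-- `t` is a child of `s`: a maximal cluster properly contained in `s`. -/
def IsChildOf {α : Type*} [DecidableEq α] (CP : Set (Finset α)) (t s : Finset α) : Prop :=
  t ∈ CP ∧ t ⊂ s ∧ ∀ u ∈ CP, u ⊂ s → t ⊆ u → u = t

/-- The number of children of `s` coloured red or purple. -/
noncomputable def aCount {α : Type*} [DecidableEq α] (CP : Set (Finset α)) (col : Finset α → Colour)
    (s : Finset α) : ℕ :=
  Set.ncard {t : Finset α | IsChildOf CP t s ∧ (col t = Colour.red ∨ col t = Colour.purple)}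

/-- The number of children of `s` coloured blue or purple. -/
noncomputable def bCount {α : Type*} [DecidableEq α] (CP : Set (Finset α)) (col : Finset α → Colour)
    (s : Finset α) : ℕ :=
  Set.ncard {t : Finset α | IsChildOf CP t s ∧ (col t = Colour.blue ∨ col t = Colour.purple)}

/-- `col` is the recursive colouring of the clusters of the cluster picture `CP`
induced by the colouring `c` of the roots. -/
def IsColouring {α : Type*} [DecidableEq α] (R : Finset α) (CP : Set (Finset α))
    (c : α → Colour) (col : Finset α → Colour) : Prop :=
  (∀ r ∈ R, col {r} = c r) ∧
    ∀ s ∈ CP, 2 ≤ s.card →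
      ((Odd (aCount CP col s) ∧ Even (bCount CP col s)) → col s = Colour.red) ∧
      ((Odd (bCount CP col s) ∧ Even (aCount CP col s)) → col s = Colour.blue) ∧
      ((Odd (aCount CP col s) ∧ Odd (bCount CP col s)) → col s = Colour.purple) ∧
      ((Even (aCount CP col s) ∧ Even (bCount CP col s)) → col s = Colour.black)

/-- A cluster is chromatic if it is red, blue or purple. -/
def Chromatic {β : Type*} (col : β → Colour) (t : β) : Prop :=
  col t = Colour.red ∨ col t = Colour.blue ∨ col t = Colour.purple


open Finset

def parityColour (m n : ℕ) : Colour :=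
  if m % 2 = 1 then (if n % 2 = 1 then Colour.purple else Colour.red)
  else (if n % 2 = 1 then Colour.blue else Colour.black)

theorem odd_sum_iff' {β : Type*} (C : Finset β) (f : β → ℕ) [DecidablePred fun t => Odd (f t)] :
    Odd (∑ t ∈ C, f t) ↔ Odd ((C.filter fun t => Odd (f t)).card) := by
  induction C using Finset.cons_induction with
  | empty => simp
  | cons a C h ih =>
    rw [Finset.sum_cons, Finset.filter_cons]
    simp only [Nat.odd_iff] at ih ⊢
    by_cases hfa : f a % 2 = 1
    · rw [if_pos hfa, Finset.card_cons]; omega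
    · rw [if_neg hfa]; omega

theorem exists_child_mem {α : Type*} [DecidableEq α] {R : Finset α} {CP : Set (Finset α)}
    (hCP : IsClusterPicture R CP) {s : Finset α} (hs : s ∈ CP) (hcard : 2 ≤ s.card)
    {x : α} (hx : x ∈ s) : ∃ t, IsChildOf CP t s ∧ x ∈ t := by
  classical
  set F := s.powerset.filter (fun u => u ∈ CP ∧ u ⊂ s ∧ x ∈ u) with hF
  have hxR : x ∈ R := (hCP.1 s hs).2 hx
  have hxs_ne : ({x} : Finset α) ≠ s := by
    intro h; rw [← h] at hcard; simp at hcard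
  have hsing : ({x} : Finset α) ∈ F := by
    simp only [hF, mem_filter, mem_powerset]
    exact ⟨singleton_subset_iff.2 hx, hCP.2.2.1 x hxR,
      (Finset.ssubset_iff_subset_ne).2 ⟨singleton_subset_iff.2 hx, hxs_ne⟩, mem_singleton_self x⟩
  obtain ⟨t, htF, hmax⟩ := F.exists_max_image Finset.card ⟨_, hsing⟩
  simp only [hF, mem_filter, mem_powerset] at htF
  obtain ⟨-, htCP, hts, hxt⟩ := htF
  refine ⟨t, ⟨htCP, hts, ?_⟩, hxt⟩
  intro u huCP hus htu
  have huF : u ∈ F := by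
    simp only [hF, mem_filter, mem_powerset]
    exact ⟨hus.1, huCP, hus, htu hxt⟩
  exact (Finset.eq_of_subset_of_card_le htu (hmax u huF)).symm

theorem children_disjoint {α : Type*} [DecidableEq α] {R : Finset α} {CP : Set (Finset α)}
    (hCP : IsClusterPicture R CP) {s t₁ t₂ : Finset α}
    (h1 : IsChildOf CP t₁ s) (h2 : IsChildOf CP t₂ s) (hne : t₁ ≠ t₂) : Disjoint t₁ t₂ := by
  rcases hCP.2.2.2 t₁ h1.1 t₂ h2.1 with h | h | h
  · exact absurd (h1.2.2 t₂ h2.1 h2.2.1 h) (Ne.symm hne)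
  · exact absurd (h2.2.2 t₁ h1.1 h1.2.1 h) hne
  · exact Finset.disjoint_iff_inter_eq_empty.2 h

theorem key_lemma {α : Type*} [DecidableEq α] (R : Finset α)
    (c : α → Colour) (hc : ∀ r ∈ R, c r = Colour.red ∨ c r = Colour.blue)
    (CP : Set (Finset α)) (hCP : IsClusterPicture R CP)
    (col : Finset α → Colour) (hcol : IsColouring R CP c col) :
    ∀ n (s : Finset α), s ∈ CP → s.card ≤ n →
      col s = parityColour (s ∩ R.filter (fun r => c r = Colour.red)).card
        (s ∩ R.filter (fun r => c r = Colour.blue)).card := by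
  classical
  intro n
  induction n with
  | zero =>
    intro s hs hle
    exact absurd (Finset.card_pos.2 (hCP.1 s hs).1) (by omega)
  | succ n ih =>
    intro s hs hle
    by_cases hcard : 2 ≤ s.card
    · -- inductive case
      set R₁ := R.filter (fun r => c r = Colour.red) with hR₁
      set R₂ := R.filter (fun r => c r = Colour.blue) with hR₂
      set C := s.powerset.filter (fun t => IsChildOf CP t s) with hC
      have hCmem : ∀ t, t ∈ C ↔ IsChildOf CP t s := by
        intro t
        simp only [hC, mem_filter, mem_powerset]
        exact ⟨fun h => h.2, fun h => ⟨h.2.1.1, h⟩⟩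
      have hUnion : ∀ X : Finset α, s ∩ X = C.biUnion (fun t => t ∩ X) := by
        intro X
        ext a
        simp only [mem_inter, mem_biUnion]
        constructor
        · rintro ⟨ha, haX⟩
          obtain ⟨t, ht, hat⟩ := exists_child_mem hCP hs hcard ha
          exact ⟨t, (hCmem t).2 ht, hat, haX⟩
        · rintro ⟨t, htC, hat, haX⟩
          exact ⟨((hCmem t).1 htC).2.1.1 hat, haX⟩
      have hdisj : ∀ X : Finset α, ∀ t₁ ∈ C, ∀ t₂ ∈ C, t₁ ≠ t₂ →
          Disjoint (t₁ ∩ X) (t₂ ∩ X) := by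
        intro X t₁ h1 t₂ h2 hne
        exact Finset.disjoint_of_subset_left (inter_subset_left)
          (Finset.disjoint_of_subset_right (inter_subset_left)
            (children_disjoint hCP ((hCmem t₁).1 h1) ((hCmem t₂).1 h2) hne))
      have hsum : ∀ X : Finset α, (s ∩ X).card = ∑ t ∈ C, (t ∩ X).card := by
        intro X
        rw [hUnion X, Finset.card_biUnion (hdisj X)]
      -- IH for children
      have hIH : ∀ t ∈ C, col t = parityColour (t ∩ R₁).card (t ∩ R₂).card := by
        intro t htC
        have h := (hCmem t).1 htC
        have hlt : t.card < s.card := Finset.card_lt_card h.2.1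
        exact ih t h.1 (by omega)
      -- counts
      have haC : aCount CP col s =
          (C.filter (fun t => Odd ((t ∩ R₁).card))).card := by
        have hset : {t : Finset α | IsChildOf CP t s ∧
            (col t = Colour.red ∨ col t = Colour.purple)} =
            ↑(C.filter (fun t => Odd ((t ∩ R₁).card))) := by
          ext t
          simp only [Set.mem_setOf_eq, Finset.coe_filter, Set.mem_setOf_eq, hCmem]
          constructor
          · rintro ⟨ht, hcolt⟩
            refine ⟨ht, ?_⟩
            have := hIH t ((hCmem t).2 ht)
            rw [this, parityColour] at hcolt
            rw [Nat.odd_iff]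
            split_ifs at hcolt with h1 h2 h2 <;> simp_all
          · rintro ⟨ht, hodd⟩
            refine ⟨ht, ?_⟩
            rw [hIH t ((hCmem t).2 ht), parityColour]
            rw [Nat.odd_iff] at hodd
            rw [if_pos hodd]
            split_ifs <;> simp
        rw [aCount, hset, Set.ncard_coe_finset]
      have hbC : bCount CP col s =
          (C.filter (fun t => Odd ((t ∩ R₂).card))).card := by
        have hset : {t : Finset α | IsChildOf CP t s ∧
            (col t = Colour.blue ∨ col t = Colour.purple)} =
            ↑(C.filter (fun t => Odd ((t ∩ R₂).card))) := by
          ext t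
          simp only [Set.mem_setOf_eq, Finset.coe_filter, Set.mem_setOf_eq, hCmem]
          constructor
          · rintro ⟨ht, hcolt⟩
            refine ⟨ht, ?_⟩
            have := hIH t ((hCmem t).2 ht)
            rw [this, parityColour] at hcolt
            rw [Nat.odd_iff]
            split_ifs at hcolt with h1 h2 h2 <;> simp_all
          · rintro ⟨ht, hodd⟩
            refine ⟨ht, ?_⟩
            rw [hIH t ((hCmem t).2 ht), parityColour]
            rw [Nat.odd_iff] at hodd
            split_ifs <;> simp_all
        rw [bCount, hset, Set.ncard_coe_finset]
      have haOdd : Odd (aCount CP col s) ↔ Odd ((s ∩ R₁).card) := by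
        rw [haC, hsum R₁, odd_sum_iff']
      have hbOdd : Odd (bCount CP col s) ↔ Odd ((s ∩ R₂).card) := by
        rw [hbC, hsum R₂, odd_sum_iff']
      obtain ⟨h1, h2, h3, h4⟩ := hcol.2 s hs hcard
      rw [parityColour]
      by_cases ha : (s ∩ R₁).card % 2 = 1 <;> by_cases hb : (s ∩ R₂).card % 2 = 1
      · rw [if_pos ha, if_pos hb]
        exact h3 ⟨haOdd.2 (Nat.odd_iff.2 ha), hbOdd.2 (Nat.odd_iff.2 hb)⟩
      · rw [if_pos ha, if_neg hb]
        exact h1 ⟨haOdd.2 (Nat.odd_iff.2 ha),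
          Nat.not_odd_iff_even.1 (fun h => hb (Nat.odd_iff.1 (hbOdd.1 h)))⟩
      · rw [if_neg ha, if_pos hb]
        exact h2 ⟨hbOdd.2 (Nat.odd_iff.2 hb),
          Nat.not_odd_iff_even.1 (fun h => ha (Nat.odd_iff.1 (haOdd.1 h)))⟩
      · rw [if_neg ha, if_neg hb]
        exact h4 ⟨Nat.not_odd_iff_even.1 (fun h => ha (Nat.odd_iff.1 (haOdd.1 h))),
          Nat.not_odd_iff_even.1 (fun h => hb (Nat.odd_iff.1 (hbOdd.1 h)))⟩
    · -- base case: singleton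
      have hne : s.Nonempty := (hCP.1 s hs).1
      have hcard1 : s.card = 1 := by
        have := Finset.card_pos.2 hne; omega
      obtain ⟨r, hr⟩ := Finset.card_eq_one.1 hcard1
      subst hr
      have hrR : r ∈ R := (hCP.1 _ hs).2 (mem_singleton_self r)
      have hcolr : col {r} = c r := hcol.1 r hrR
      rcases hc r hrR with hcr | hcr
      · have h1 : ({r} : Finset α) ∩ R.filter (fun x => c x = Colour.red) = {r} :=
          Finset.singleton_inter_of_mem (by simp [hrR, hcr])
        have h2 : ({r} : Finset α) ∩ R.filter (fun x => c x = Colour.blue) = ∅ :=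
          Finset.singleton_inter_of_notMem (by simp [hcr])
        rw [h1, h2, hcolr, hcr]
        rfl
      · have h1 : ({r} : Finset α) ∩ R.filter (fun x => c x = Colour.red) = ∅ :=
          Finset.singleton_inter_of_notMem (by simp [hcr])
        have h2 : ({r} : Finset α) ∩ R.filter (fun x => c x = Colour.blue) = {r} :=
          Finset.singleton_inter_of_mem (by simp [hrR, hcr])
        rw [h1, h2, hcolr, hcr]
        rfl


/-- A cluster is red iff it contains an odd number of red roots and an even
number of blue roots. -/
theorem cluster_red_iff {α : Type*} [DecidableEq α] (R : Finset α) (hR : R.Nonempty)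
    (c : α → Colour) (hc : ∀ r ∈ R, c r = Colour.red ∨ c r = Colour.blue)
    (CP : Set (Finset α)) (hCP : IsClusterPicture R CP)
    (col : Finset α → Colour) (hcol : IsColouring R CP c col)
    (s : Finset α) (hs : s ∈ CP) :
    col s = Colour.red ↔
      Odd (s ∩ R.filter (fun r => c r = Colour.red)).card ∧
        Even (s ∩ R.filter (fun r => c r = Colour.blue)).card := by
  have hkey := key_lemma R c hc CP hCP col hcol s.card s hs le_rfl
  rw [hkey, parityColour]
  constructor
  · intro h
    split_ifs at h with h1 h2 h2 <;> simp_all [Nat.odd_iff, Nat.even_iff] <;> omega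
  · rintro ⟨hodd, heven⟩
    rw [Nat.odd_iff] at hodd
    rw [Nat.even_iff] at heven
    rw [if_pos hodd, if_neg (by omega)]
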